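/- arXiv:1909.12150 — 5 statements merged into one kernel-verified Lean document; each statement's English description precedes it below -/
import Mathlib

section
/- (Strong monotonicity of avalanches started at the origin) Let (N, D, θ) be a sandpile model in dimension d with complete neighborhood N, and let c be a stable configuration lying within the elementary hypercube of side n. Then in the parallel evolution started from c + 1_{0^d}, every cell topples at most once: for every t ≥ 0 and every x ∈ ℤ^d, #{s < t : F^s(c + 1_{0^d})(x) ≥ θ} ∈ {0, 1}. -/
/-- A sandpile model in dimension `d`: a finite nonempty neighborhood
`N ⊆ ℤ^d \ {0}` and a distribution `D` with `D v ≥ 1` for `v ∈ N`. -/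
structure Sandpile (d : ℕ) where
  N : Finset (Fin d → ℤ)
  D : (Fin d → ℤ) → ℕ
  N_nonempty : N.Nonempty
  zero_not_mem : (0 : Fin d → ℤ) ∉ N
  D_pos : ∀ v ∈ N, 1 ≤ D v

/-- The stability threshold `θ = Σ_{v ∈ N} D(v)`. -/
def Sandpile.θ {d : ℕ} (M : Sandpile d) : ℕ := ∑ v ∈ M.N, M.D v

/-- The Heaviside function: `H n = 1` if `n ≥ 0`, else `0`. -/
def Heaviside (n : ℤ) : ℕ := if 0 ≤ n then 1 else 0

/-- The parallel global rule `F`. -/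
def Sandpile.F {d : ℕ} (M : Sandpile d) (c : (Fin d → ℤ) → ℕ) : (Fin d → ℤ) → ℕ :=
  fun x => c x - M.θ * Heaviside ((c x : ℤ) - (M.θ : ℤ))
    + ∑ y ∈ M.N, M.D y * Heaviside ((c (x + y) : ℤ) - (M.θ : ℤ))

/-- A configuration is stable when every cell holds fewer than `θ` grains. -/
def Sandpile.Stable {d : ℕ} (M : Sandpile d) (c : (Fin d → ℤ) → ℕ) : Prop :=
  ∀ x, c x < M.θ

/-- A configuration is finite when its total number of grains is finite,
equivalently its support is finite. -/
def FiniteConfig {d : ℕ} (c : (Fin d → ℤ) → ℕ) : Prop :=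
  (Function.support c).Finite

/-- Sequential toppling at an unstable cell `x`: remove `θ` grains from `x`
and add `D(y−x)` grains to each `y ∈ x + N`, other cells unchanged. -/
def Sandpile.SeqStepAt {d : ℕ} (M : Sandpile d) (x : Fin d → ℤ)
    (c c' : (Fin d → ℤ) → ℕ) : Prop :=
  M.θ ≤ c x ∧
    ∀ y, c' y = (if y = x then c y - M.θ else c y)
      + (if y - x ∈ M.N then M.D (y - x) else 0)

/-- `c ⇀ c'`: a sequential toppling at some unstable cell. -/
def Sandpile.SeqStep {d : ℕ} (M : Sandpile d)
    (c c' : (Fin d → ℤ) → ℕ) : Prop :=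
  ∃ x, M.SeqStepAt x c c'

/-- `c ⇀* c'`: reflexive–transitive closure of `⇀`. -/
def Sandpile.SeqReach {d : ℕ} (M : Sandpile d)
    (c c' : (Fin d → ℤ) → ℕ) : Prop :=
  Relation.ReflTransGen M.SeqStep c c'

/-- The neighborhood is complete: every element of `ℤ^d` is a nonnegative
integer combination of elements of `N`. -/
def Sandpile.Complete {d : ℕ} (M : Sandpile d) : Prop :=
  ∀ z : Fin d → ℤ, ∃ a : (Fin d → ℤ) → ℕ, z = ∑ v ∈ M.N, (a v : ℤ) • v

/-- The configuration lies within the elementary hypercube of side `n`: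
`c x = 0` for all `x ∉ {0,…,n−1}^d`. -/
def InCube {d : ℕ} (n : ℕ) (c : (Fin d → ℤ) → ℕ) : Prop :=
  ∀ x : Fin d → ℤ, (¬ ∀ i, 0 ≤ x i ∧ x i < (n : ℤ)) → c x = 0

/-- Add one grain at cell `y` (i.e. `c + 1_y`). -/
def addGrain {d : ℕ} (c : (Fin d → ℤ) → ℕ) (y : Fin d → ℤ) : (Fin d → ℤ) → ℕ :=
  fun x => if x = y then c x + 1 else c x

/-!
Grain conservation gives `F^t(a)(x) + θ·T_t(x) = a(x) + ∑_w D(w)·T_t(x + w)`, where `T_t` counts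
topplings. While all counts are at most one the sum is at most `θ`, so a cell that is unstable at
time `t` with `a(x) ≤ θ·T_t(x)` forces all its neighbours to have toppled already. Completeness
yields `v ∈ N` with `ℓ v > 0` for `ℓ x = -∑ i, x i`, and `ℓ ≤ 0` on the support of `c + 1₀`.
Induction on `t` then shows that every toppled cell has `ℓ ≤ 0` (the first toppling of a cell
with `ℓ > 0` needs its neighbour in direction `v` to have toppled before) and that no cell topples
twice (a second toppling needs `a(x) ≥ θ`, hence happens at the origin, and again needs the
neighbour `v` to have toppled).
-/

open Finset

namespace Sandpile

variable {d : ℕ} (M : Sandpile d)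

def toppleCount (a : (Fin d → ℤ) → ℕ) (t : ℕ) (x : Fin d → ℤ) : ℕ :=
  #{s ∈ range t | M.θ ≤ M.F^[s] a x}

lemma heaviside_sub_θ (c : ℕ) : Heaviside ((c : ℤ) - (M.θ : ℤ)) = if M.θ ≤ c then 1 else 0 := by
  simp [Heaviside]

lemma F_add_θ_mul (c : (Fin d → ℤ) → ℕ) (x : Fin d → ℤ) :
    M.F c x + M.θ * (if M.θ ≤ c x then 1 else 0)
      = c x + ∑ w ∈ M.N, M.D w * (if M.θ ≤ c (x + w) then 1 else 0) := by
  simp only [Sandpile.F, heaviside_sub_θ]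
  split_ifs <;> omega

lemma toppleCount_zero (a : (Fin d → ℤ) → ℕ) (x : Fin d → ℤ) : M.toppleCount a 0 x = 0 := by
  simp [toppleCount]

lemma toppleCount_succ (a : (Fin d → ℤ) → ℕ) (t : ℕ) (x : Fin d → ℤ) :
    M.toppleCount a (t + 1) x = M.toppleCount a t x + if M.θ ≤ M.F^[t] a x then 1 else 0 := by
  rw [toppleCount, range_add_one, filter_insert]
  split_ifs
  · rw [card_insert_of_notMem (by simp)]; rfl
  · rfl

theorem iterate_F_add_θ_mul_toppleCount (a : (Fin d → ℤ) → ℕ) (t : ℕ) (x : Fin d → ℤ) :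
    M.F^[t] a x + M.θ * M.toppleCount a t x
      = a x + ∑ w ∈ M.N, M.D w * M.toppleCount a t (x + w) := by
  induction t with
  | zero => simp [toppleCount_zero]
  | succ t ih =>
    have step := M.F_add_θ_mul (M.F^[t] a) x
    simp only [toppleCount_succ, Nat.mul_add, sum_add_distrib, Function.iterate_succ_apply']
    omega

lemma eq_one_of_θ_le_sum_mul {u : (Fin d → ℤ) → ℕ} (hu : ∀ w ∈ M.N, u w ≤ 1)
    (h : M.θ ≤ ∑ w ∈ M.N, M.D w * u w) {w : Fin d → ℤ} (hw : w ∈ M.N) : u w = 1 := by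
  by_contra hne
  have hlt : ∑ w ∈ M.N, M.D w * u w < ∑ w ∈ M.N, M.D w := by
    refine sum_lt_sum (fun i hi => mul_le_of_le_one_right (Nat.zero_le _) (hu i hi)) ⟨w, hw, ?_⟩
    rw [show u w = 0 by have := hu w hw; omega, mul_zero]
    exact M.D_pos w hw
  exact absurd h (not_le.2 hlt)

theorem toppleCount_add_eq_one {a : (Fin d → ℤ) → ℕ} {t : ℕ}
    (hle : ∀ y, M.toppleCount a t y ≤ 1) {x : Fin d → ℤ} (hx : M.θ ≤ M.F^[t] a x)
    (hax : a x ≤ M.θ * M.toppleCount a t x) {w : Fin d → ℤ} (hw : w ∈ M.N) :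
    M.toppleCount a t (x + w) = 1 := by
  have := M.iterate_F_add_θ_mul_toppleCount a t x
  exact M.eq_one_of_θ_le_sum_mul (u := fun w => M.toppleCount a t (x + w))
    (fun w _ => hle _) (by omega) hw

lemma sum_mul_toppleCount_le_θ {a : (Fin d → ℤ) → ℕ} {t : ℕ}
    (hle : ∀ y, M.toppleCount a t y ≤ 1) (x : Fin d → ℤ) :
    ∑ w ∈ M.N, M.D w * M.toppleCount a t (x + w) ≤ M.θ :=
  sum_le_sum fun _ _ => mul_le_of_le_one_right (Nat.zero_le _) (hle _)

lemma θ_le_of_unstable_of_toppleCount_eq_one {a : (Fin d → ℤ) → ℕ} {t : ℕ}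
    (hle : ∀ y, M.toppleCount a t y ≤ 1) {x : Fin d → ℤ} (hx : M.θ ≤ M.F^[t] a x)
    (hx₁ : M.toppleCount a t x = 1) : M.θ ≤ a x := by
  have := M.iterate_F_add_θ_mul_toppleCount a t x
  have := M.sum_mul_toppleCount_le_θ hle x
  rw [hx₁] at *
  omega

section Functional

variable {a : (Fin d → ℤ) → ℕ} {ℓ : (Fin d → ℤ) →+ ℤ} {v : Fin d → ℤ}

lemma neg_of_unstable (hv : v ∈ M.N) (hℓv : 0 < ℓ v) {t : ℕ}
    (hle : ∀ y, M.toppleCount a t y ≤ 1) (hℓ : ∀ y, 0 < M.toppleCount a t y → ℓ y ≤ 0)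
    {x : Fin d → ℤ} (hx : M.θ ≤ M.F^[t] a x) (hax : a x ≤ M.θ * M.toppleCount a t x) :
    ℓ x < 0 := by
  have := hℓ (x + v) (by rw [M.toppleCount_add_eq_one hle hx hax hv]; exact one_pos)
  rw [map_add] at this
  omega

theorem toppleCount_le_one_and_nonpos (hv : v ∈ M.N) (hℓv : 0 < ℓ v)
    (ha_le : ∀ x, a x ≤ M.θ) (hsupp : ∀ x, a x ≠ 0 → ℓ x ≤ 0)
    (hunstable : ∀ x, M.θ ≤ a x → 0 ≤ ℓ x) (t : ℕ) :
    (∀ x, M.toppleCount a t x ≤ 1) ∧ ∀ x, 0 < M.toppleCount a t x → ℓ x ≤ 0 := by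
  induction t with
  | zero => simp [toppleCount_zero]
  | succ t ih =>
    obtain ⟨hle, hℓ⟩ := ih
    refine forall_and.1 fun x => ?_
    have hneg := M.neg_of_unstable hv hℓv hle hℓ (x := x)
    rw [toppleCount_succ]
    by_cases hx : M.θ ≤ M.F^[t] a x
    · have hx₀ : M.toppleCount a t x = 0 := by
        by_contra hx₁
        have hx₁ : M.toppleCount a t x = 1 := by have := hle x; omega
        have hθ := M.θ_le_of_unstable_of_toppleCount_eq_one hle hx hx₁
        have := hneg hx (by rw [hx₁, mul_one]; exact ha_le x)
        have := hunstable x hθ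
        omega
      refine ⟨by simp [hx₀, hx], fun _ => ?_⟩
      by_cases hax : a x = 0
      · exact (hneg hx (by rw [hax]; exact Nat.zero_le _)).le
      · exact hsupp x hax
    · simpa [hx] using ⟨hle x, hℓ x⟩

end Functional

variable {M}

theorem Complete.exists_mem_pos (hM : M.Complete) (ℓ : (Fin d → ℤ) →+ ℤ) {z : Fin d → ℤ}
    (hz : 0 < ℓ z) : ∃ v ∈ M.N, 0 < ℓ v := by
  obtain ⟨k, rfl⟩ := hM z
  simp only [map_sum, map_zsmul, smul_eq_mul] at hz
  obtain ⟨v, hv, hpos⟩ := exists_lt_of_sum_lt (f := fun _ => (0 : ℤ)) (by simpa using hz)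
  exact ⟨v, hv, pos_of_mul_pos_right hpos (by positivity)⟩

lemma Stable.addGrain_le {c : (Fin d → ℤ) → ℕ} (hc : M.Stable c) (y x : Fin d → ℤ) :
    addGrain c y x ≤ M.θ := by
  have := hc x
  unfold addGrain
  split_ifs <;> omega

lemma Stable.eq_of_θ_le_addGrain {c : (Fin d → ℤ) → ℕ} (hc : M.Stable c) {x y : Fin d → ℤ}
    (h : M.θ ≤ addGrain c y x) : x = y := by
  by_contra hxy
  have := hc x
  simp only [addGrain, hxy, if_false] at h
  omega

end Sandpile

lemma InCube.nonneg_of_addGrain_ne_zero {d n : ℕ} {c : (Fin d → ℤ) → ℕ} (hc : InCube n c)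
    {x : Fin d → ℤ} (hx : addGrain c 0 x ≠ 0) (i : Fin d) : 0 ≤ x i := by
  by_cases hx₀ : x = 0
  · simp [hx₀]
  · by_contra hneg
    exact hx (by simp [addGrain, hx₀, hc x fun h => hneg (h i).1])

/-- strong monotonicity of avalanches started at the origin:
for a complete neighborhood and a stable configuration `c` within the
elementary hypercube of side `n`, in the parallel evolution from `c + 1_{0}`
every cell topples at most once. -/
theorem sandpile_avalanche_topples_at_most_once {d : ℕ} (hd : 1 ≤ d)
    (M : Sandpile d) (hcomp : M.Complete) (n : ℕ)
    (c : (Fin d → ℤ) → ℕ) (hstable : M.Stable c) (hcube : InCube n c)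
    (t : ℕ) (x : Fin d → ℤ) :
    ((Finset.range t).filter
      (fun s => M.θ ≤ M.F^[s] (addGrain c 0) x)).card ≤ 1 := by
  let ℓ : (Fin d → ℤ) →+ ℤ := -∑ i, Pi.evalAddMonoidHom (fun _ : Fin d => ℤ) i
  have hℓ (y : Fin d → ℤ) : ℓ y = -∑ i, y i := by simp [ℓ]
  obtain ⟨v, hv, hℓv⟩ := hcomp.exists_mem_pos ℓ (z := fun _ => -1) (by simp [hℓ]; omega)
  refine (M.toppleCount_le_one_and_nonpos hv hℓv (hstable.addGrain_le 0)
    (fun y hy => ?_) (fun y hy => ?_) t).1 x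
  · rw [hℓ, neg_nonpos]
    exact sum_nonneg fun i _ => hcube.nonneg_of_addGrain_ne_zero hy i
  · rw [hstable.eq_of_θ_le_addGrain hy, map_zero]
end

section
/- Let (N, D, θ) be a sandpile model in dimension d, let c be a finite stable configuration and y ∈ ℤ^d. In any sequential derivation from c + 1_{y}, the cell y that received the extra grain is always a most-toppled cell: for every sequential derivation c + 1_{y} = c_0 ⇀_{x_1} c_1 ⇀ … ⇀_{x_k} c_k and every z ∈ ℤ^d, #{i : x_i = y} ≥ #{i : x_i = z}. -/
/-- in any sequential derivation from `c + 1_y` (with `c` a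
finite stable configuration), the cell `y` that received the extra grain is
always a most-toppled cell. -/
theorem sandpile_added_cell_most_toppled {d : ℕ} (hd : 1 ≤ d) (M : Sandpile d)
    (c : (Fin d → ℤ) → ℕ) (hfin : FiniteConfig c) (hstable : M.Stable c)
    (y : Fin d → ℤ)
    (k : ℕ) (cs : Fin (k + 1) → (Fin d → ℤ) → ℕ) (xs : Fin k → (Fin d → ℤ))
    (hc0 : cs 0 = addGrain c y)
    (hstep : ∀ i : Fin k, M.SeqStepAt (xs i) (cs i.castSucc) (cs i.succ))
    (z : Fin d → ℤ) :
    (Finset.univ.filter (fun i : Fin k => xs i = z)).card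
      ≤ (Finset.univ.filter (fun i : Fin k => xs i = y)).card := by
  classical
  -- extend xs to ℕ
  set X : ℕ → (Fin d → ℤ) := fun j => if h : j < k then xs ⟨j, h⟩ else 0 with hX
  -- toppling counts
  set T : ℕ → (Fin d → ℤ) → ℕ :=
    fun i z => ∑ j ∈ Finset.range i, if X j = z then 1 else 0 with hTdef
  have hT0 : ∀ z, T 0 z = 0 := by intro z; simp [hTdef]
  have hTsucc : ∀ i z, T (i + 1) z = T i z + (if X i = z then 1 else 0) := by
    intro i z
    show (∑ j ∈ Finset.range (i+1), if X j = z then 1 else 0) = _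
    rw [Finset.sum_range_succ]
  have hXval : ∀ i (hi : i < k), X i = xs ⟨i, hi⟩ := by
    intro i hi; simp [hX, hi]
  -- the configuration value in terms of toppling counts
  have hconf : ∀ i, (hi : i ≤ k) → ∀ x,
      (cs ⟨i, Nat.lt_succ_of_le hi⟩ x : ℤ)
        = (cs 0 x : ℤ) + (∑ v ∈ M.N, (M.D v : ℤ) * T i (x - v))
            - (M.θ : ℤ) * T i x := by
    intro i
    induction i with
    | zero =>
      intro hi x
      have h0 : (⟨0, Nat.lt_succ_of_le hi⟩ : Fin (k + 1)) = 0 := rfl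
      rw [h0]
      simp [hT0]
    | succ i ih =>
      intro hi x
      have hik : i < k := hi
      obtain ⟨hθle, hstep'⟩ := hstep ⟨i, hik⟩
      have hcast : (Fin.castSucc ⟨i, hik⟩ : Fin (k + 1))
          = ⟨i, Nat.lt_succ_of_le hik.le⟩ := rfl
      have hsuccfin : (Fin.succ ⟨i, hik⟩ : Fin (k + 1))
          = ⟨i + 1, Nat.lt_succ_of_le hi⟩ := rfl
      rw [hcast] at hstep' hθle
      have hx := hstep' x
      rw [hsuccfin] at hx
      have ihx := ih hik.le x
      have hXi : X i = xs ⟨i, hik⟩ := hXval i hik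
      -- the neighbor sum after one more toppling
      have hsum : (∑ v ∈ M.N, (M.D v : ℤ) * T (i + 1) (x - v))
          = (∑ v ∈ M.N, (M.D v : ℤ) * T i (x - v))
            + (if x - X i ∈ M.N then (M.D (x - X i) : ℤ) else 0) := by
        have h1 : ∀ v, (M.D v : ℤ) * T (i + 1) (x - v)
            = (M.D v : ℤ) * T i (x - v)
              + (if v = x - X i then (M.D v : ℤ) else 0) := by
          intro v
          rw [hTsucc]
          by_cases h : X i = x - v
          · have hv : v = x - X i := by rw [h]; ring
            rw [if_pos h, if_pos hv]
            push_cast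
            ring
          · have hv : v ≠ x - X i := by
              intro hv; apply h; rw [hv]; ring
            rw [if_neg h, if_neg hv]
            push_cast
            ring
        calc (∑ v ∈ M.N, (M.D v : ℤ) * T (i + 1) (x - v))
            = ∑ v ∈ M.N, ((M.D v : ℤ) * T i (x - v)
                + (if v = x - X i then (M.D v : ℤ) else 0)) :=
              Finset.sum_congr rfl (fun v _ => h1 v)
          _ = _ := by rw [Finset.sum_add_distrib, Finset.sum_ite_eq']
      rw [hsum, hTsucc]
      by_cases hxw : x = xs ⟨i, hik⟩
      · have hθle' : M.θ ≤ cs ⟨i, Nat.lt_succ_of_le hik.le⟩ x := by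
          rw [hxw]; exact hθle
        have hXix : X i = x := by rw [hXi]; exact hxw.symm
        rw [hx, if_pos hxw, ← hXi, if_pos hXix, Nat.cast_add,
          Nat.cast_sub hθle', ihx]
        split_ifs with hmem <;> push_cast <;> ring
      · have hXix : X i ≠ x := by rw [hXi]; exact fun h => hxw h.symm
        rw [hx, if_neg hxw, ← hXi, if_neg hXix, Nat.cast_add, ihx]
        split_ifs with hmem <;> push_cast <;> ring
  -- θ as a sum
  have hθsum : (M.θ : ℤ) = ∑ v ∈ M.N, (M.D v : ℤ) := by
    simp [Sandpile.θ]
  -- the main invariant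
  have hmain : ∀ i, i ≤ k → ∀ z, T i z ≤ T i y := by
    intro i
    induction i with
    | zero => intro _ z; simp [hT0]
    | succ i ih =>
      intro hi z
      have hik : i < k := hi
      have ihz := ih hik.le
      rw [hTsucc i z, hTsucc i y]
      by_cases hzy : z = y
      · rw [hzy]
      · by_cases hwz : X i = z
        · have hwy : X i ≠ y := by rw [hwz]; exact hzy
          have hlt : T i z < T i y := by
            by_contra hcon
            push_neg at hcon
            have heq : T i z = T i y := le_antisymm (ihz z) hcon
            obtain ⟨hθle, _⟩ := hstep ⟨i, hik⟩
            have hcast : (Fin.castSucc ⟨i, hik⟩ : Fin (k + 1))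
                = ⟨i, Nat.lt_succ_of_le hik.le⟩ := rfl
            rw [hcast] at hθle
            have hxz : xs ⟨i, hik⟩ = z := by rw [← hXval i hik]; exact hwz
            rw [hxz] at hθle
            have hval := hconf i hik.le z
            have hbound : (∑ v ∈ M.N, (M.D v : ℤ) * T i (z - v))
                ≤ (M.θ : ℤ) * T i y := by
              calc (∑ v ∈ M.N, (M.D v : ℤ) * T i (z - v))
                  ≤ ∑ v ∈ M.N, (M.D v : ℤ) * T i y := by
                    apply Finset.sum_le_sum
                    intro v _
                    have := ihz (z - v)
                    exact mul_le_mul_of_nonneg_left (by exact_mod_cast this)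
                      (by positivity)
                _ = (M.θ : ℤ) * T i y := by
                    rw [← Finset.sum_mul, hθsum]
            have hc0z : cs 0 z = c z := by
              rw [hc0]; simp [addGrain, hzy]
            have hlt2 : (cs 0 z : ℤ) < (M.θ : ℤ) := by
              rw [hc0z]; exact_mod_cast hstable z
            have hθle' : (M.θ : ℤ) ≤ (cs ⟨i, Nat.lt_succ_of_le hik.le⟩ z : ℤ) := by
              exact_mod_cast hθle
            rw [heq] at hval
            linarith
          have h1 : (if X i = z then 1 else 0) ≤ 1 := by split <;> omega
          omega
        · have h0 : (if X i = z then 1 else 0) = 0 := by simp [hwz]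
          have := ihz z
          omega
  -- conclude
  have hfinal : ∀ w, (Finset.univ.filter (fun j : Fin k => xs j = w)).card = T k w := by
    intro w
    have h1 : T k w = ∑ j : Fin k, (if X (j : ℕ) = w then 1 else 0) :=
      (Fin.sum_univ_eq_sum_range (fun j => if X j = w then 1 else 0) k).symm
    rw [h1, Finset.card_filter]
    apply Finset.sum_congr rfl
    intro j _
    rw [hXval (j : ℕ) j.isLt]
  rw [hfinal z, hfinal y]
  exact hmain k le_rfl z
end

section
/- Let N ⊆ ℤ^d \ {0} be a finite nonempty set and let X ⊂ ℤ^d be finite and nonempty. Define X_in = {(y,x) : y ∉ X, x ∈ X, x−y ∈ N} (arcs entering X) and X_out = {(x,y) : x ∈ X, y ∉ X, y−x ∈ N} (arcs leaving X). Then there exists a bijection λ : X_in → X_out such that λ((y,x)) = (x',y') implies x + x' = y + y' (in particular the entering arc (y,x) and the leaving arc (x',y') have the same difference vector x − y = y' − x' ∈ N). -/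
/-- The set of arcs entering `X`: pairs `(y,x)` with `y ∉ X`, `x ∈ X` and
`x − y ∈ N`. -/
def ArcsIn {d : ℕ} (N : Finset (Fin d → ℤ)) (X : Set (Fin d → ℤ)) :
    Set ((Fin d → ℤ) × (Fin d → ℤ)) :=
  {p | p.1 ∉ X ∧ p.2 ∈ X ∧ p.2 - p.1 ∈ N}

/-- The set of arcs leaving `X`: pairs `(x,y)` with `x ∈ X`, `y ∉ X` and
`y − x ∈ N`. -/
def ArcsOut {d : ℕ} (N : Finset (Fin d → ℤ)) (X : Set (Fin d → ℤ)) :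
    Set ((Fin d → ℤ) × (Fin d → ℤ)) :=
  {p | p.1 ∈ X ∧ p.2 ∉ X ∧ p.2 - p.1 ∈ N}

/-! For each direction `v`, the arcs of direction `v` entering `X` start in `(X - v) \ X` and
those leaving it start in `X \ (X - v)`. The translate `X - v` has as many points as the finite
set `X`, so these two differences have the same size, and matching arcs direction by direction
gives the bijection; an arc `(y, x)` sent to `(x', y')` then has `x - y = y' - x'`. -/

theorem nonempty_preimage_addRight_sdiff_equiv {G : Type*} [AddGroup G] {X : Set G}
    (hX : X.Finite) (v : G) :
    Nonempty (((· + v) ⁻¹' X \ X : Set G) ≃ (X \ (· + v) ⁻¹' X : Set G)) := by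
  have : Finite ((· + v) ⁻¹' X) := hX.preimage (add_left_injective v).injOn
  have : Finite X := hX
  let := Fintype.ofFinite ((· + v) ⁻¹' X)
  let := Fintype.ofFinite X
  exact ⟨Equiv.setDiffEquiv <| Fintype.card_congr <|
    (Equiv.addRight v).subtypeEquiv fun _ => Iff.rfl⟩

def subtypeSndSubFstEqEquiv {G : Type*} [AddCommGroup G] (S : Set (G × G)) (v : G) :
    {p : S // p.1.2 - p.1.1 = v} ≃ {y : G // (y, y + v) ∈ S} where
  toFun p := ⟨p.1.1.1, by simp [← p.2]⟩
  invFun y := ⟨⟨(y.1, y.1 + v), y.2⟩, by simp⟩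
  left_inv p := by ext <;> simp [← p.2]
  right_inv y := rfl

theorem nonempty_arcsIn_slice_equiv_arcsOut_slice {d : ℕ} (N : Finset (Fin d → ℤ))
    {X : Set (Fin d → ℤ)} (hX : X.Finite) (v : Fin d → ℤ) :
    Nonempty ({y // (y, y + v) ∈ ArcsIn N X} ≃ {x // (x, x + v) ∈ ArcsOut N X}) := by
  by_cases hv : v ∈ N
  · obtain ⟨e⟩ := nonempty_preimage_addRight_sdiff_equiv hX v
    exact ⟨(Equiv.subtypeEquivRight fun y => by simp [ArcsIn, hv, and_comm]).trans <|
      e.trans <| Equiv.subtypeEquivRight fun x => by simp [ArcsOut, hv]⟩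
  · exact ⟨Equiv.subtypeEquivRight fun y => by simp [ArcsIn, ArcsOut, hv]⟩

theorem sandpile_in_out_bijection_general {d : ℕ}
    (N : Finset (Fin d → ℤ))
    (X : Set (Fin d → ℤ)) (hX : X.Finite) :
    ∃ e : ArcsIn N X ≃ ArcsOut N X,
      ∀ p : ArcsIn N X, p.1.2 + ((e p : (Fin d → ℤ) × (Fin d → ℤ)).1)
        = p.1.1 + ((e p : (Fin d → ℤ) × (Fin d → ℤ)).2) := by
  let e (v : Fin d → ℤ) : {p : ArcsIn N X // p.1.2 - p.1.1 = v} ≃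
      {q : ArcsOut N X // q.1.2 - q.1.1 = v} :=
    (subtypeSndSubFstEqEquiv _ v).trans <|
      (nonempty_arcsIn_slice_equiv_arcsOut_slice N hX v).some.trans
        (subtypeSndSubFstEqEquiv _ v).symm
  refine ⟨Equiv.ofFiberEquiv e, fun p => ?_⟩
  have same_direction := Equiv.ofFiberEquiv_map e p
  linear_combination -same_direction

/-- for a finite neighborhood `N ⊆ ℤ^d \ {0}` and a finite
nonempty `X ⊂ ℤ^d`, there is a bijection `λ : X_in → X_out` such that
`λ((y,x)) = (x',y')` implies `x + x' = y + y'`. -/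
theorem sandpile_in_out_bijection {d : ℕ} (hd : 1 ≤ d)
    (N : Finset (Fin d → ℤ)) (hN : N.Nonempty) (h0 : (0 : Fin d → ℤ) ∉ N)
    (X : Set (Fin d → ℤ)) (hX : X.Finite) (hXne : X.Nonempty) :
    ∃ e : ArcsIn N X ≃ ArcsOut N X,
      ∀ p : ArcsIn N X, p.1.2 + ((e p : (Fin d → ℤ) × (Fin d → ℤ)).1)
        = p.1.1 + ((e p : (Fin d → ℤ) × (Fin d → ℤ)).2) :=
  sandpile_in_out_bijection_general N X hX
end

section
/- Let (N, D, θ) be a sandpile model in dimension d with complete neighborhood N, set r = max{|v|_∞ : v ∈ N}, and let c be a configuration lying within the elementary hypercube of side n with c(x) < 2θ for every cell x. Then for every t ≥ 0, the configuration c' = F^t(c) satisfies c'(x) = 0 for every cell x with |x|_∞ > 4·θ·r·n^d. -/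
/-- `r` is the maximal sup-norm of a neighborhood vector:
`r = max{|v|_∞ : v ∈ N}`. -/
def Sandpile.IsRadius {d : ℕ} (M : Sandpile d) (r : ℕ) : Prop :=
  (∀ v ∈ M.N, ∀ i, (v i).natAbs ≤ r) ∧ (∃ v ∈ M.N, ∃ i, (v i).natAbs = r)

/-
Grains advance by at most `r` per step in each coordinate, and the total mass never increases,
so it stays at most `(2θ - 1)·nᵈ`. Completeness makes every slab `{z | m ≤ ±z i < m + 2r}`
absorbing: an unstable cell of the slab has a neighbour towards the slab's centre within
distance `r`, so once the slab holds a grain it holds one forever. A grain beyond distance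
`4θrnᵈ` has crossed `(2θ - 1)·nᵈ + 1` disjoint such slabs outside the initial cube, and each of
them keeps a grain: more grains than the total mass.
-/

lemma heaviside_natCast_sub (a b : ℕ) : Heaviside ((a : ℤ) - b) = if b ≤ a then 1 else 0 := by
  simp [Heaviside]

namespace Sandpile

variable {d : ℕ} (M : Sandpile d)

lemma θ_pos : 0 < M.θ := by
  obtain ⟨v, hv⟩ := M.N_nonempty
  exact (M.D_pos v hv).trans (Finset.single_le_sum (fun _ _ => Nat.zero_le _) hv)

lemma F_apply (c : (Fin d → ℤ) → ℕ) (x : Fin d → ℤ) :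
    M.F c x = (if M.θ ≤ c x then c x - M.θ else c x)
      + ∑ y ∈ M.N, if M.θ ≤ c (x + y) then M.D y else 0 := by
  simp only [F, heaviside_natCast_sub, mul_ite, mul_one, mul_zero]
  split_ifs <;> simp

variable {M} {c : (Fin d → ℤ) → ℕ} {x : Fin d → ℤ}

lemma IsRadius.one_le {r : ℕ} (hr : M.IsRadius r) : 1 ≤ r := by
  obtain ⟨v, hv⟩ := M.N_nonempty
  by_contra! hr0
  refine M.zero_not_mem ((funext fun i => ?_ : v = 0) ▸ hv)
  have := hr.1 v hv i
  simp only [Pi.zero_apply]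
  omega

lemma Complete.exists_map_nonpos (hM : M.Complete) (φ : (Fin d → ℤ) →+ ℤ) :
    ∃ y ∈ M.N, φ y ≤ 0 := by
  by_contra! hpos
  obtain ⟨v, hv⟩ := M.N_nonempty
  obtain ⟨a, ha⟩ := hM (-v)
  have hsum : 0 ≤ ∑ w ∈ M.N, (a w : ℤ) * φ w :=
    Finset.sum_nonneg fun w hw => mul_nonneg (Int.natCast_nonneg _) (hpos w hw).le
  have hφv : φ (-v) = ∑ w ∈ M.N, (a w : ℤ) * φ w := by
    rw [ha, map_sum]
    simp only [map_zsmul, smul_eq_mul]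
  have := hpos v hv
  rw [map_neg] at hφv
  linarith

lemma Complete.exists_map_nonneg (hM : M.Complete) (φ : (Fin d → ℤ) →+ ℤ) :
    ∃ y ∈ M.N, 0 ≤ φ y := by
  obtain ⟨y, hy, hφy⟩ := hM.exists_map_nonpos (-φ)
  exact ⟨y, hy, by simpa using hφy⟩

lemma F_apply_ne_zero_of_lt (h0 : c x ≠ 0) (hlt : c x < M.θ) : M.F c x ≠ 0 := by
  simp [F_apply, Nat.not_le.2 hlt, h0]

lemma F_apply_ne_zero_of_le {y : Fin d → ℤ} (hy : y ∈ M.N) (hle : M.θ ≤ c (x + y)) :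
    M.F c x ≠ 0 := by
  have hD : M.D y ≤ ∑ y' ∈ M.N, if M.θ ≤ c (x + y') then M.D y' else 0 := by
    simpa [hle] using Finset.single_le_sum (f := fun y' => if M.θ ≤ c (x + y') then M.D y' else 0)
      (fun _ _ => Nat.zero_le _) hy
  have := M.D_pos y hy
  rw [F_apply]
  omega

lemma ne_zero_or_exists_le_of_F_apply_ne_zero (h : M.F c x ≠ 0) :
    c x ≠ 0 ∨ ∃ y ∈ M.N, M.θ ≤ c (x + y) := by
  contrapose! h
  obtain ⟨h0, hlt⟩ := h
  simp [F_apply, h0, Finset.sum_eq_zero fun y hy => if_neg (hlt y hy).not_ge]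

/-- Toppling only moves grains, but those sent out of `B` are not counted. -/
lemma sum_F_le_sum {B : Finset (Fin d → ℤ)} (hB : Function.support c ⊆ B) :
    ∑ x ∈ B, M.F c x ≤ ∑ x ∈ B, c x := by
  classical
  set U := B.filter fun z => M.θ ≤ c z with hU
  have hkept : ∑ x ∈ B, (if M.θ ≤ c x then c x - M.θ else c x) + M.θ * U.card
      = ∑ x ∈ B, c x := by
    rw [mul_comm, ← smul_eq_mul, ← Finset.sum_const, hU, Finset.sum_filter,
      ← Finset.sum_add_distrib]
    refine Finset.sum_congr rfl fun x _ => ?_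
    split_ifs <;> omega
  have hreceived : ∀ y ∈ M.N,
      ∑ x ∈ B, (if M.θ ≤ c (x + y) then M.D y else 0) ≤ M.D y * U.card := by
    intro y _
    rw [← Finset.sum_filter, Finset.sum_const, smul_eq_mul, mul_comm]
    refine Nat.mul_le_mul_left _ (Finset.card_le_card_of_injOn (· + y) ?_
      (add_left_injective y).injOn)
    intro z hz
    simp only [Finset.coe_filter, Set.mem_ofPred_eq, U] at hz ⊢
    exact ⟨hB (M.θ_pos.trans_le hz.2).ne', hz.2⟩
  calc ∑ x ∈ B, M.F c x
      = ∑ x ∈ B, (if M.θ ≤ c x then c x - M.θ else c x)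
        + ∑ y ∈ M.N, ∑ x ∈ B, if M.θ ≤ c (x + y) then M.D y else 0 := by
        simp only [F_apply, Finset.sum_add_distrib, Finset.sum_comm (s := B)]
    _ ≤ ∑ x ∈ B, (if M.θ ≤ c x then c x - M.θ else c x) + M.θ * U.card := by
        grw [Finset.sum_le_sum hreceived, ← Finset.sum_mul]
        rfl
    _ = ∑ x ∈ B, c x := hkept

lemma support_F_subset :
    Function.support (M.F c) ⊆
      Function.support c ∪ ⋃ y ∈ M.N, (· + y) ⁻¹' Function.support c := by
  intro x hx
  rcases ne_zero_or_exists_le_of_F_apply_ne_zero hx with h0 | ⟨y, hy, hle⟩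
  · exact Or.inl h0
  · exact Or.inr (Set.mem_biUnion hy (M.θ_pos.trans_le hle).ne')

end Sandpile

section Mass

variable {d : ℕ} {M : Sandpile d} {c : (Fin d → ℤ) → ℕ}

lemma FiniteConfig.F (hc : FiniteConfig c) : FiniteConfig (M.F c) :=
  (hc.union (M.N.finite_toSet.biUnion fun y _ =>
    hc.preimage (add_left_injective y).injOn)).subset Sandpile.support_F_subset

lemma FiniteConfig.iterate_F (hc : FiniteConfig c) (t : ℕ) : FiniteConfig (M.F^[t] c) := by
  induction t with
  | zero => exact hc
  | succ t ih => simpa only [Function.iterate_succ_apply'] using ih.F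

lemma Sandpile.finsum_F_le (hc : FiniteConfig c) : ∑ᶠ x, M.F c x ≤ ∑ᶠ x, c x := by
  classical
  set B := (hc.union hc.F).toFinset
  have hcB : Function.support c ⊆ B := Set.Finite.coe_toFinset _ ▸ Set.subset_union_left
  have hFB : Function.support (M.F c) ⊆ B := Set.Finite.coe_toFinset _ ▸ Set.subset_union_right
  rw [finsum_eq_sum_of_support_subset _ hFB, finsum_eq_sum_of_support_subset _ hcB]
  exact Sandpile.sum_F_le_sum hcB

lemma Sandpile.finsum_iterate_F_le (hc : FiniteConfig c) (t : ℕ) :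
    ∑ᶠ x, M.F^[t] c x ≤ ∑ᶠ x, c x := by
  induction t with
  | zero => rfl
  | succ t ih =>
    rw [Function.iterate_succ_apply']
    exact (Sandpile.finsum_F_le (hc.iterate_F t)).trans ih

lemma FiniteConfig.card_le_finsum (hc : FiniteConfig c) {ι : Type*} [Fintype ι]
    {w : ι → Fin d → ℤ} (hw : Function.Injective w) (hne : ∀ k, c (w k) ≠ 0) :
    Fintype.card ι ≤ ∑ᶠ x, c x := by
  classical
  rw [finsum_eq_sum_of_support_subset _ hc.coe_toFinset.ge]
  calc Fintype.card ι = ∑ x ∈ Finset.univ.image w, 1 := by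
        rw [Finset.sum_const, smul_eq_mul, mul_one, Finset.card_image_of_injective _ hw,
          Finset.card_univ]
    _ ≤ ∑ x ∈ Finset.univ.image w, c x :=
        Finset.sum_le_sum fun x hx => by
          obtain ⟨k, -, rfl⟩ := Finset.mem_image.1 hx
          exact Nat.one_le_iff_ne_zero.2 (hne k)
    _ ≤ ∑ x ∈ hc.toFinset, c x := Finset.sum_le_sum_of_subset fun x hx => by
        obtain ⟨k, -, rfl⟩ := Finset.mem_image.1 hx
        exact (Set.Finite.mem_toFinset hc).2 (hne k)

variable {n : ℕ}

lemma InCube.support_subset (hc : InCube n c) :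
    Function.support c ⊆ Fintype.piFinset fun _ : Fin d => Finset.Ico (0 : ℤ) n := by
  intro x hx
  by_contra hout
  refine hx (hc x fun hin => hout ?_)
  simpa [Fintype.mem_piFinset] using hin

lemma InCube.abs_lt (hc : InCube n c) {x : Fin d → ℤ} (hx : c x ≠ 0) (i : Fin d) :
    |x i| < n := by
  have := Fintype.mem_piFinset.1 (hc.support_subset hx) i
  rw [Finset.mem_Ico] at this
  rw [abs_of_nonneg this.1]
  exact this.2

lemma InCube.finiteConfig (hc : InCube n c) : FiniteConfig c :=
  (Finset.finite_toSet _).subset hc.support_subset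

lemma InCube.finsum_add_le (hc : InCube n c) {k : ℕ} (hk : ∀ x, c x < k) :
    ∑ᶠ x, c x + n ^ d ≤ k * n ^ d := by
  rw [finsum_eq_sum_of_support_subset _ hc.support_subset]
  calc _ = ∑ x ∈ Fintype.piFinset fun _ : Fin d => Finset.Ico (0 : ℤ) n, (c x + 1) := by
        simp [Finset.sum_add_distrib]
    _ ≤ ∑ _x ∈ Fintype.piFinset fun _ : Fin d => Finset.Ico (0 : ℤ) n, k :=
        Finset.sum_le_sum fun x _ => hk x
    _ = k * n ^ d := by simp [mul_comm]

end Mass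

lemma eq_of_mem_Ico_add_mul {m w z : ℤ} {a b : ℕ} (ha : z ∈ Set.Ico (m + w * a) (m + w * a + w))
    (hb : z ∈ Set.Ico (m + w * b) (m + w * b + w)) : a = b := by
  obtain ⟨ha₁, ha₂⟩ := ha
  obtain ⟨hb₁, hb₂⟩ := hb
  have hw : 0 ≤ w := by linarith
  have hab : (a : ℤ) < b + 1 := lt_of_mul_lt_mul_left (by linarith) hw
  have hba : (b : ℤ) < a + 1 := lt_of_mul_lt_mul_left (by linarith) hw
  omega

lemma exists_addMonoidHom_abs_eq {d : ℕ} (i : Fin d) (x : Fin d → ℤ) :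
    ∃ φ : (Fin d → ℤ) →+ ℤ, (∀ z, |φ z| = |z i|) ∧ φ x = |x i| := by
  rcases abs_choice (x i) with h | h
  · exact ⟨Pi.evalAddMonoidHom (fun _ => ℤ) i, fun z => rfl, h.symm⟩
  · exact ⟨-Pi.evalAddMonoidHom (fun _ => ℤ) i, fun z => by simp, by simp [h]⟩

def OccupiesSlab {d : ℕ} (φ : (Fin d → ℤ) →+ ℤ) (m w : ℤ) (c : (Fin d → ℤ) → ℕ) : Prop :=
  ∃ z, c z ≠ 0 ∧ φ z ∈ Set.Ico m (m + w)

namespace Sandpile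

variable {d : ℕ} {M : Sandpile d} {c : (Fin d → ℤ) → ℕ} {φ : (Fin d → ℤ) →+ ℤ} {m r : ℤ}

/-- An unstable cell in the lower half of the slab feeds a neighbour no lower and at most `r`
higher; completeness supplies one, and symmetrically in the upper half. -/
lemma occupiesSlab_F (hM : M.Complete) (hφ : ∀ y ∈ M.N, |φ y| ≤ r)
    (h : OccupiesSlab φ m (2 * r) c) : OccupiesSlab φ m (2 * r) (M.F c) := by
  obtain ⟨z, hz, hzm, hzm'⟩ := h
  rcases lt_or_ge (c z) M.θ with hlt | hle
  · exact ⟨z, F_apply_ne_zero_of_lt hz hlt, hzm, hzm'⟩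
  have hfed : ∀ y ∈ M.N, M.F c (z - y) ≠ 0 := fun y hy =>
    F_apply_ne_zero_of_le hy (by rwa [sub_add_cancel])
  rcases lt_or_ge (φ z) (m + r) with hlow | hhigh
  · obtain ⟨y, hy, hφy⟩ := hM.exists_map_nonpos φ
    have := abs_le.1 (hφ y hy)
    exact ⟨z - y, hfed y hy, by rw [map_sub]; constructor <;> linarith⟩
  · obtain ⟨y, hy, hφy⟩ := hM.exists_map_nonneg φ
    have := abs_le.1 (hφ y hy)
    exact ⟨z - y, hfed y hy, by rw [map_sub]; constructor <;> linarith⟩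

/-- Grains advance by at most `r` per step, so the first grain beyond level `m` lands in the
slab, which then stays occupied. -/
lemma occupiesSlab_iterate_F (hM : M.Complete) (hφ : ∀ y ∈ M.N, |φ y| ≤ r)
    (h₀ : ∀ z, c z ≠ 0 → φ z < m) {t : ℕ} {x : Fin d → ℤ} (hx : M.F^[t] c x ≠ 0)
    (hm : m ≤ φ x) : OccupiesSlab φ m (2 * r) (M.F^[t] c) := by
  induction t generalizing x with
  | zero => exact absurd (h₀ x hx) hm.not_gt
  | succ t ih =>
    rw [Function.iterate_succ_apply'] at hx ⊢
    by_cases hslab : OccupiesSlab φ m (2 * r) (M.F^[t] c)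
    · exact occupiesSlab_F hM hφ hslab
    have hbelow : ∀ z, M.F^[t] c z ≠ 0 → φ z < m := fun z hz =>
      not_le.1 fun hzm => hslab (ih hz hzm)
    rcases ne_zero_or_exists_le_of_F_apply_ne_zero hx with hx₀ | ⟨y, hy, hle⟩
    · exact absurd (hbelow x hx₀) hm.not_gt
    · have hxy := hbelow (x + y) (M.θ_pos.trans_le hle).ne'
      have := abs_le.1 (hφ y hy)
      rw [map_add] at hxy
      exact ⟨x, hx, hm, by linarith⟩

end Sandpile

lemma FiniteConfig.le_finsum_of_occupiesSlab {d : ℕ} {c : (Fin d → ℤ) → ℕ} (hc : FiniteConfig c)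
    {φ : (Fin d → ℤ) →+ ℤ} {m w : ℤ} {K : ℕ} (h : ∀ k : Fin K, OccupiesSlab φ (m + w * k) w c) :
    K ≤ ∑ᶠ x, c x := by
  choose z hz using h
  have hinj : Function.Injective z := fun a b hab =>
    Fin.ext (eq_of_mem_Ico_add_mul (hz a).2 (hab ▸ (hz b).2))
  simpa using hc.card_le_finsum hinj fun k => (hz k).1

theorem sandpile_spread_bound_general {d : ℕ} (M : Sandpile d)
    (hcomp : M.Complete) (r : ℕ) (hr : M.IsRadius r) (n : ℕ)
    (c : (Fin d → ℤ) → ℕ) (hcube : InCube n c) (hbound : ∀ x, c x < 2 * M.θ)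
    (t : ℕ) (x : Fin d → ℤ) (hx : ∃ i, 4 * M.θ * r * n ^ d < (x i).natAbs) :
    M.F^[t] c x = 0 := by
  by_contra hxt
  obtain ⟨i, hi⟩ := hx
  obtain ⟨φ, hφ, hφx⟩ := exists_addMonoidHom_abs_eq i x
  set T := ∑ᶠ z, c z
  have hwindows : n + 2 * r * T ≤ 4 * M.θ * r * n ^ d := by
    have hT := hcube.finsum_add_le hbound
    have := hr.one_le
    have : n ≤ n ^ d := Nat.le_self_pow i.pos.ne' n
    nlinarith
  have hslabs : ∀ k : Fin (T + 1), OccupiesSlab φ (n + 2 * r * k) (2 * r) (M.F^[t] c) := by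
    intro k
    refine Sandpile.occupiesSlab_iterate_F hcomp (fun y hy => ?_) (fun z hz => ?_) hxt ?_
    · rw [hφ, Int.abs_eq_natAbs]
      exact_mod_cast hr.1 y hy i
    · linarith [le_abs_self (φ z), hφ z, hcube.abs_lt hz i, (by positivity : (0 : ℤ) ≤ 2 * r * k)]
    · have : n + 2 * r * k ≤ 4 * M.θ * r * n ^ d :=
        le_trans (by gcongr; exact Nat.lt_succ_iff.1 k.2) hwindows
      rw [hφx, Int.abs_eq_natAbs]
      exact_mod_cast this.trans hi.le
  have hcount := (hcube.finiteConfig.iterate_F t).le_finsum_of_occupiesSlab hslabs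
  have hmass := Sandpile.finsum_iterate_F_le (M := M) hcube.finiteConfig t
  omega

/-- for a complete neighborhood of radius `r` and a configuration
`c` within the elementary hypercube of side `n` with all cells below `2θ`,
at every time `t` of the parallel evolution, every cell at sup-norm distance
greater than `4·θ·r·n^d` from the origin is empty. -/
theorem sandpile_spread_bound {d : ℕ} (hd : 1 ≤ d) (M : Sandpile d)
    (hcomp : M.Complete) (r : ℕ) (hr : M.IsRadius r) (n : ℕ)
    (c : (Fin d → ℤ) → ℕ) (hcube : InCube n c) (hbound : ∀ x, c x < 2 * M.θ)
    (t : ℕ) (x : Fin d → ℤ) (hx : ∃ i, 4 * M.θ * r * n ^ d < (x i).natAbs) :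
    M.F^[t] c x = 0 :=
  sandpile_spread_bound_general M hcomp r hr n c hcube hbound t x hx
end

section
/- (Local determination of one-dimensional avalanches) Let (N, D, θ) be a sandpile model in dimension 1 with complete neighborhood N and r = max{|v| : v ∈ N}. Let c and ĉ be stable configurations, each lying within the elementary hypercube of side n, and suppose the parallel evolutions from c + 1_{0} and from ĉ + 1_{0} reach stable configurations c' and ĉ' respectively; for z ∈ ℤ write odo(z) (resp. ôdo(z)) for the total number of topplings at cell z in the evolution from c + 1_{0} to c' (resp. from ĉ + 1_{0} to ĉ'). Let x ≤ y be integers with x + r ≤ y. If c(z) = ĉ(z) for all z ∈ [x, y], and odo(z) = ôdo(z) for all z ∈ [x−r, x−1] ∪ [y+1, y+r], then odo(z) = ôdo(z) for all z ∈ [x, y]. -/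
/-- A sandpile model in dimension 1: a finite nonempty neighborhood
`N ⊆ ℤ \ {0}` and a distribution `D` with `D v ≥ 1` for `v ∈ N`. -/
structure Sandpile1 where
  N : Finset ℤ
  D : ℤ → ℕ
  N_nonempty : N.Nonempty
  zero_not_mem : (0 : ℤ) ∉ N
  D_pos : ∀ v ∈ N, 1 ≤ D v

/-- The stability threshold `θ = Σ_{v ∈ N} D(v)`. -/
def Sandpile1.θ (M : Sandpile1) : ℕ := ∑ v ∈ M.N, M.D v

/-- The parallel global rule `F`. -/
def Sandpile1.F (M : Sandpile1) (c : ℤ → ℕ) : ℤ → ℕ :=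
  fun x => c x - M.θ * Heaviside ((c x : ℤ) - (M.θ : ℤ))
    + ∑ y ∈ M.N, M.D y * Heaviside ((c (x + y) : ℤ) - (M.θ : ℤ))

/-- A configuration is stable when every cell holds fewer than `θ` grains. -/
def Sandpile1.Stable (M : Sandpile1) (c : ℤ → ℕ) : Prop := ∀ x, c x < M.θ

/-- The neighborhood is complete: every integer is a nonnegative integer
combination of elements of `N`. -/
def Sandpile1.Complete (M : Sandpile1) : Prop :=
  ∀ z : ℤ, ∃ a : ℤ → ℕ, z = ∑ v ∈ M.N, (a v : ℤ) * v

/-- `r` is the maximal absolute value of a neighborhood vector: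
`r = max{|v| : v ∈ N}`. -/
def Sandpile1.IsRadius (M : Sandpile1) (r : ℕ) : Prop :=
  (∀ v ∈ M.N, v.natAbs ≤ r) ∧ (∃ v ∈ M.N, v.natAbs = r)

/-- The configuration lies within the elementary hypercube (interval) of side
`n`: `c x = 0` for `x ∉ {0,…,n−1}`. -/
def InCube1 (n : ℕ) (c : ℤ → ℕ) : Prop :=
  ∀ x : ℤ, ¬(0 ≤ x ∧ x < (n : ℤ)) → c x = 0

/-- Add one grain at cell `0` (i.e. `c + 1_0`). -/
def addGrain0 (c : ℤ → ℕ) : ℤ → ℕ := fun x => if x = 0 then c x + 1 else c x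

/-- The number of topplings at cell `z` during the first `t` parallel steps
from configuration `a`. -/
def odo (M : Sandpile1) (a : ℤ → ℕ) (t : ℕ) (z : ℤ) : ℕ :=
  ((Finset.range t).filter (fun s => M.θ ≤ M.F^[s] a z)).card

lemma odo_succ (M : Sandpile1) (a : ℤ → ℕ) (t : ℕ) (z : ℤ) :
    odo M a (t+1) z = odo M a t z + if M.θ ≤ M.F^[t] a z then 1 else 0 := by
  unfold odo
  rw [Finset.range_add_one, Finset.filter_insert]
  split
  · rw [Finset.card_insert_of_notMem (by simp)]
  · simp

lemma heaviside_cast (M : Sandpile1) (m : ℕ) :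
    (Heaviside ((m:ℤ) - (M.θ:ℤ)) : ℤ) = if M.θ ≤ m then 1 else 0 := by
  simp only [Heaviside, sub_nonneg, Nat.cast_le]
  split <;> simp

lemma F_cast (M : Sandpile1) (c : ℤ → ℕ) (z : ℤ) :
    (M.F c z : ℤ) = (c z : ℤ) - (M.θ : ℤ) * (if M.θ ≤ c z then 1 else 0)
      + ∑ v ∈ M.N, (M.D v : ℤ) * (if M.θ ≤ c (z+v) then 1 else 0) := by
  have hs : ∑ v ∈ M.N, (M.D v:ℤ) * ((Heaviside ((c (z+v):ℤ) - (M.θ:ℤ)) : ℕ) : ℤ)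
      = ∑ v ∈ M.N, (M.D v:ℤ) * (if M.θ ≤ c (z+v) then 1 else 0) :=
    Finset.sum_congr rfl (fun v _ => by rw [heaviside_cast])
  unfold Sandpile1.F
  by_cases h : M.θ ≤ c z
  · have h1 : Heaviside ((c z : ℤ) - (M.θ : ℤ)) = 1 := by
      unfold Heaviside; rw [if_pos]; omega
    push_cast [h1, Nat.cast_sub (by omega : M.θ * 1 ≤ c z)]
    rw [if_pos h, hs]
  · have h1 : Heaviside ((c z : ℤ) - (M.θ : ℤ)) = 0 := by
      unfold Heaviside; rw [if_neg]; omega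
    push_cast [h1, Nat.mul_zero, Nat.sub_zero]
    rw [if_neg h, hs]
    ring

lemma odo_succ_cast (M : Sandpile1) (a : ℤ → ℕ) (t : ℕ) (z : ℤ) :
    ((odo M a (t+1) z : ℕ) : ℤ)
      = (odo M a t z : ℤ) + (if M.θ ≤ M.F^[t] a z then 1 else 0) := by
  rw [odo_succ]
  split <;> push_cast <;> ring

lemma odo_eq (M : Sandpile1) (a : ℤ → ℕ) (t : ℕ) (z : ℤ) :
    (M.F^[t] a z : ℤ) = (a z : ℤ)
      + ∑ v ∈ M.N, (M.D v : ℤ) * (odo M a t (z + v) : ℤ)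
      - (M.θ : ℤ) * (odo M a t z : ℤ) := by
  induction t generalizing z with
  | zero => simp [odo]
  | succ t ih =>
    rw [Function.iterate_succ_apply', F_cast, ih z, odo_succ_cast]
    have hs : ∑ v ∈ M.N, (M.D v : ℤ) * (odo M a (t+1) (z + v) : ℤ)
        = ∑ v ∈ M.N, ((M.D v : ℤ) * (odo M a t (z + v) : ℤ)
          + (M.D v : ℤ) * (if M.θ ≤ M.F^[t] a (z+v) then 1 else 0)) := by
      apply Finset.sum_congr rfl
      intro v hv
      rw [odo_succ_cast]
      ring
    rw [hs, Finset.sum_add_distrib]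
    ring

lemma least_action (M : Sandpile1) (a : ℤ → ℕ) (l : ℤ → ℕ)
    (hl : ∀ z : ℤ, (a z : ℤ) + ∑ v ∈ M.N, (M.D v : ℤ) * (l (z + v) : ℤ)
        - (M.θ : ℤ) * (l z : ℤ) < (M.θ : ℤ)) :
    ∀ t z, odo M a t z ≤ l z := by
  intro t
  induction t with
  | zero => intro z; simp [odo]
  | succ t ih =>
    intro z
    rw [odo_succ]
    by_cases h : M.θ ≤ M.F^[t] a z
    · simp only [h, if_true]
      by_contra hcon
      push_neg at hcon
      have heq : odo M a t z = l z := by have := ih z; omega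
      have h1 := odo_eq M a t z
      have h2 := hl z
      have h3 : ∑ v ∈ M.N, (M.D v : ℤ) * (odo M a t (z+v) : ℤ)
          ≤ ∑ v ∈ M.N, (M.D v : ℤ) * (l (z+v) : ℤ) := by
        apply Finset.sum_le_sum
        intro v hv
        have hle : (odo M a t (z+v) : ℤ) ≤ (l (z+v) : ℤ) := by
          exact_mod_cast ih (z+v)
        exact mul_le_mul_of_nonneg_left hle (by positivity)
      have h4 : (M.θ : ℤ) ≤ (M.F^[t] a z : ℤ) := by exact_mod_cast h
      rw [h1, heq] at h4
      linarith
    · simp only [h, if_false]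
      have := ih z; omega

lemma sum_mono_D (M : Sandpile1) (f g : ℤ → ℕ) (z : ℤ)
    (h : ∀ v ∈ M.N, f (z + v) ≤ g (z + v)) :
    ∑ v ∈ M.N, (M.D v : ℤ) * (f (z + v) : ℤ)
      ≤ ∑ v ∈ M.N, (M.D v : ℤ) * (g (z + v) : ℤ) := by
  apply Finset.sum_le_sum
  intro v hv
  exact mul_le_mul_of_nonneg_left (by exact_mod_cast h v hv) (by positivity)

lemma hybrid_le (M : Sandpile1) (r : ℕ) (hvr : ∀ v ∈ M.N, v.natAbs ≤ r)
    (a a₂ : ℤ → ℕ) (t t' : ℕ)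
    (hstab : M.Stable (M.F^[t] a)) (hstab' : M.Stable (M.F^[t'] a₂))
    (x y : ℤ)
    (hagree : ∀ z, x ≤ z → z ≤ y → a z = a₂ z)
    (hring : ∀ z, ¬(x ≤ z ∧ z ≤ y) → x - (r:ℤ) ≤ z → z ≤ y + (r:ℤ) →
       odo M a t z = odo M a₂ t' z) :
    ∀ z, x ≤ z → z ≤ y → odo M a t z ≤ odo M a₂ t' z := by
  set u : ℤ → ℕ := fun z => odo M a t z with hu
  set w : ℤ → ℕ := fun z => odo M a₂ t' z with hw
  set l : ℤ → ℕ := fun z => if x ≤ z ∧ z ≤ y then min (u z) (w z) else u z with hldef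
  have hlu : ∀ z, l z ≤ u z := by
    intro z
    simp only [hldef]
    split
    · exact min_le_left _ _
    · exact le_refl _
  have hnbr : ∀ z, x ≤ z → z ≤ y → ∀ v ∈ M.N,
      x - (r:ℤ) ≤ z + v ∧ z + v ≤ y + (r:ℤ) := by
    intro z hx hy v hv
    have h1 : ((v.natAbs : ℕ) : ℤ) ≤ (r : ℤ) := by exact_mod_cast hvr v hv
    rw [Int.natCast_natAbs] at h1
    have h2 := abs_le.mp h1
    omega
  have hlw : ∀ z, x ≤ z → z ≤ y → ∀ v ∈ M.N, l (z + v) ≤ w (z + v) := by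
    intro z hx hy v hv
    simp only [hldef]
    split
    · exact min_le_right _ _
    · next hzv =>
      have hb := hnbr z hx hy v hv
      exact le_of_eq (hring (z + v) hzv hb.1 hb.2)
  have key : ∀ z : ℤ, (a z : ℤ) + ∑ v ∈ M.N, (M.D v : ℤ) * (l (z + v) : ℤ)
      - (M.θ : ℤ) * (l z : ℤ) < (M.θ : ℤ) := by
    intro z
    by_cases hz : x ≤ z ∧ z ≤ y
    · by_cases hmin : u z ≤ w z
      · have hlz : l z = u z := by simp only [hldef, if_pos hz]; exact min_eq_left hmin
        have hsum := sum_mono_D M l u z (fun v _ => hlu (z + v))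
        have heq := odo_eq M a t z
        have hst : ((M.F^[t] a z : ℕ) : ℤ) < (M.θ : ℤ) := by exact_mod_cast hstab z
        rw [heq] at hst
        rw [hlz]
        calc (a z : ℤ) + ∑ v ∈ M.N, (M.D v : ℤ) * (l (z + v) : ℤ) - (M.θ : ℤ) * (u z : ℤ)
            ≤ (a z : ℤ) + ∑ v ∈ M.N, (M.D v : ℤ) * (u (z + v) : ℤ) - (M.θ : ℤ) * (u z : ℤ) := by
              linarith
          _ < (M.θ : ℤ) := hst
      · have hlz : l z = w z := by
          simp only [hldef, if_pos hz]; exact min_eq_right (le_of_not_ge hmin)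
        have hsum := sum_mono_D M l w z (hlw z hz.1 hz.2)
        have heq := odo_eq M a₂ t' z
        have hst : ((M.F^[t'] a₂ z : ℕ) : ℤ) < (M.θ : ℤ) := by exact_mod_cast hstab' z
        rw [heq] at hst
        rw [hlz, hagree z hz.1 hz.2]
        calc (a₂ z : ℤ) + ∑ v ∈ M.N, (M.D v : ℤ) * (l (z + v) : ℤ) - (M.θ : ℤ) * (w z : ℤ)
            ≤ (a₂ z : ℤ) + ∑ v ∈ M.N, (M.D v : ℤ) * (w (z + v) : ℤ) - (M.θ : ℤ) * (w z : ℤ) := by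
              linarith
          _ < (M.θ : ℤ) := hst
    · have hlz : l z = u z := by simp only [hldef, if_neg hz]
      have hsum := sum_mono_D M l u z (fun v _ => hlu (z + v))
      have heq := odo_eq M a t z
      have hst : ((M.F^[t] a z : ℕ) : ℤ) < (M.θ : ℤ) := by exact_mod_cast hstab z
      rw [heq] at hst
      rw [hlz]
      calc (a z : ℤ) + ∑ v ∈ M.N, (M.D v : ℤ) * (l (z + v) : ℤ) - (M.θ : ℤ) * (u z : ℤ)
          ≤ (a z : ℤ) + ∑ v ∈ M.N, (M.D v : ℤ) * (u (z + v) : ℤ) - (M.θ : ℤ) * (u z : ℤ) := by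
            linarith
        _ < (M.θ : ℤ) := hst
  intro z hx hy
  have h1 := least_action M a l key t z
  have h2 : l z ≤ w z := by
    simp only [hldef, if_pos (And.intro hx hy)]
    exact min_le_right _ _
  exact le_trans h1 h2

/-- local determination of one-dimensional avalanches: if two
stable configurations `c`, `c₂` within the elementary hypercube of side `n`
agree on `[x, y]` and their avalanches from `c + 1_0`, `c₂ + 1_0` (stabilizing
in `t` resp. `t'` parallel steps) have the same odometer on
`[x−r, x−1] ∪ [y+1, y+r]`, then the odometers coincide on all of `[x, y]`. -/
theorem sandpile1_avalanche_local_determination (M : Sandpile1)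
    (hcomp : M.Complete) (r : ℕ) (hr : M.IsRadius r) (n : ℕ)
    (c c₂ : ℤ → ℕ) (hc : M.Stable c) (hc2 : M.Stable c₂)
    (hcube : InCube1 n c) (hc2cube : InCube1 n c₂)
    (t t' : ℕ)
    (hstab : M.Stable (M.F^[t] (addGrain0 c)))
    (hstab' : M.Stable (M.F^[t'] (addGrain0 c₂)))
    (x y : ℤ) (hxy : x ≤ y) (hxry : x + (r : ℤ) ≤ y)
    (hagree : ∀ z : ℤ, x ≤ z → z ≤ y → c z = c₂ z)
    (hodo : ∀ z : ℤ,
      ((x - (r : ℤ) ≤ z ∧ z ≤ x - 1) ∨ (y + 1 ≤ z ∧ z ≤ y + (r : ℤ))) →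
      odo M (addGrain0 c) t z = odo M (addGrain0 c₂) t' z) :
    ∀ z : ℤ, x ≤ z → z ≤ y →
      odo M (addGrain0 c) t z = odo M (addGrain0 c₂) t' z := by
  have hagree' : ∀ z, x ≤ z → z ≤ y → addGrain0 c z = addGrain0 c₂ z := by
    intro z hx hy
    unfold addGrain0
    rw [hagree z hx hy]
  have hring : ∀ z, ¬(x ≤ z ∧ z ≤ y) → x - (r:ℤ) ≤ z → z ≤ y + (r:ℤ) →
      odo M (addGrain0 c) t z = odo M (addGrain0 c₂) t' z := by
    intro z hz h1 h2
    exact hodo z (by omega)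
  intro z hx hy
  have hle := hybrid_le M r hr.1 (addGrain0 c) (addGrain0 c₂) t t' hstab hstab' x y
    hagree' hring z hx hy
  have hge := hybrid_le M r hr.1 (addGrain0 c₂) (addGrain0 c) t' t hstab' hstab x y
    (fun z hx hy => (hagree' z hx hy).symm)
    (fun z hz h1 h2 => (hring z hz h1 h2).symm) z hx hy
  omega
end
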